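/- arXiv:1703.06489 — 3 statements merged into one kernel-verified Lean document; each statement's English description precedes it below -/
import Mathlib

section
/- Let G be a finite group, ω a normalized 3-cocycle on G with values in ℂˣ, and g ∈ G. Then the restriction of θ_g to the centralizer C_G(g) = {h ∈ G : hg = gh} is a 2-cocycle: for all x, y, z ∈ C_G(g), θ_g(x,y)·θ_g(xy,z) = θ_g(y,z)·θ_g(x,yz). -/
/-- Right conjugation `g^x = x⁻¹ * g * x`. -/
def groupConj {G : Type*} [Group G] (g x : G) : G := x⁻¹ * g * x

/-- `ω : G × G × G → ℂˣ` is a normalized multiplicative 3-cocycle. -/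
def IsNormalized3Cocycle {G : Type*} [Group G] (ω : G → G → G → ℂˣ) : Prop :=
  (∀ a b c d : G, ω b c d * ω a (b * c) d * ω a b c = ω (a * b) c d * ω a b (c * d)) ∧
  (∀ a b c : G, a = 1 ∨ b = 1 ∨ c = 1 → ω a b c = 1)

/-- `θ_g(x,y) = ω(g,x,y)·ω(x,y,g^{xy})·ω(x,g^x,y)⁻¹`. -/
def thetaDPR {G : Type*} [Group G] (ω : G → G → G → ℂˣ) (g x y : G) : ℂˣ :=
  ω g x y * ω x y (groupConj g (x * y)) * (ω x (groupConj g x) y)⁻¹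

/-- `γ_x(a,b) = ω(a,b,x)·ω(x,a^x,b^x)·ω(a,x,b^x)⁻¹`. -/
def gammaDPR {G : Type*} [Group G] (ω : G → G → G → ℂˣ) (x a b : G) : ℂˣ :=
  ω a b x * ω x (groupConj a x) (groupConj b x) * (ω a x (groupConj b x))⁻¹

/-!
On the centralizer of `g` every conjugate `g^x` is `g` itself, so `θ_g` becomes the slant product
`(x, y) ↦ ω(g,x,y)·ω(x,y,g)·ω(x,g,y)⁻¹`. Its 2-coboundary at `(x, y, z)` is the alternating product
of the 3-cocycle identity at `(g,x,y,z)`, `(x,g,y,z)`, `(x,y,g,z)` and `(x,y,z,g)`, once `g` is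
moved past `x`, `y`, `z` inside the arguments.
-/

theorem groupConj_eq_self_of_commute {G : Type*} [Group G] {g x : G} (h : Commute x g) :
    groupConj g x = g :=
  h.inv_mul_cancel

section SlantProduct

variable {G M : Type*} [Group G] [CommGroup M]

def slantProduct (ω : G → G → G → M) (g x y : G) : M :=
  ω g x y * ω x y g / ω x g y

theorem slantProduct_mul_slantProduct_of_commute {ω : G → G → G → M}
    (hω : ∀ a b c d : G, ω b c d * ω a (b * c) d * ω a b c = ω (a * b) c d * ω a b (c * d))
    {g x y z : G} (hx : Commute x g) (hy : Commute y g) (hz : Commute z g) :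
    slantProduct ω g x y * slantProduct ω g (x * y) z =
      slantProduct ω g y z * slantProduct ω g x (y * z) := by
  have hgxyz := congrArg Additive.ofMul (hω g x y z)
  have hxgyz := congrArg Additive.ofMul (hω x g y z)
  have hxygz := congrArg Additive.ofMul (hω x y g z)
  have hxyzg := congrArg Additive.ofMul (hω x y z g)
  rw [hx.eq] at hxgyz
  rw [hy.eq] at hxygz
  rw [hz.eq] at hxyzg
  -- `abel` normalizes only additively written groups.
  apply Additive.ofMul.injective
  simp only [slantProduct, ofMul_mul, ofMul_div] at hgxyz hxgyz hxygz hxyzg ⊢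
  linear_combination (norm := abel) hgxyz - hxgyz + hxygz - hxyzg

end SlantProduct

theorem thetaDPR_eq_slantProduct {G : Type*} [Group G] (ω : G → G → G → ℂˣ) {g x y : G}
    (hx : Commute x g) (hy : Commute y g) : thetaDPR ω g x y = slantProduct ω g x y := by
  rw [thetaDPR, slantProduct, groupConj_eq_self_of_commute hx,
    groupConj_eq_self_of_commute (hx.mul_left hy), div_eq_mul_inv]

theorem theta_is_two_cocycle_on_centralizer_general {G : Type*} [Group G]
    (ω : G → G → G → ℂˣ) (hω : IsNormalized3Cocycle ω) (g : G) :
    ∀ x y z : G, x * g = g * x → y * g = g * y → z * g = g * z →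
      thetaDPR ω g x y * thetaDPR ω g (x * y) z =
        thetaDPR ω g y z * thetaDPR ω g x (y * z) := by
  rintro x y z (hx : Commute x g) (hy : Commute y g) (hz : Commute z g)
  rw [thetaDPR_eq_slantProduct ω hx hy, thetaDPR_eq_slantProduct ω (hx.mul_left hy) hz,
    thetaDPR_eq_slantProduct ω hy hz, thetaDPR_eq_slantProduct ω hx (hy.mul_left hz)]
  exact slantProduct_mul_slantProduct_of_commute hω.1 hx hy hz

/-- The restriction of `θ_g` to the centralizer `C_G(g)` is a 2-cocycle. -/
theorem theta_is_two_cocycle_on_centralizer {G : Type*} [Group G] [Finite G]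
    (ω : G → G → G → ℂˣ) (hω : IsNormalized3Cocycle ω) (g : G) :
    ∀ x y z : G, x * g = g * x → y * g = g * y → z * g = g * z →
      thetaDPR ω g x y * thetaDPR ω g (x * y) z =
        thetaDPR ω g y z * thetaDPR ω g x (y * z) :=
  theta_is_two_cocycle_on_centralizer_general ω hω g
end

section
/- Let G be a finite group and ω a normalized 3-cocycle on G with values in ℂˣ. Then for all a, b, x, y ∈ G one has the mixed identity θ_{ab}(x,y)·γ_{xy}(a,b) = θ_a(x,y)·θ_b(x,y)·γ_x(a,b)·γ_y(a^x, b^x). (This identity is what makes the coproduct of the twisted quantum double D^ω(G) an algebra homomorphism.) -/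
/-!
For an arbitrary 3-cochain `ω`, the quotient of the two sides is a product of six values of the
coboundary `dω` and their inverses; for a cocycle each of them is `1`.
-/

/-- The coboundary `dω(a,b,c,d)` of a 3-cochain with values in a trivial module. -/
def coboundary3 {G M : Type*} [Group G] [CommGroup M] (ω : G → G → G → M) (a b c d : G) : M :=
  ω b c d * ω a (b * c) d * ω a b c / (ω (a * b) c d * ω a b (c * d))

theorem IsNormalized3Cocycle.coboundary3_eq_one {G : Type*} [Group G] {ω : G → G → G → ℂˣ}
    (hω : IsNormalized3Cocycle ω) (a b c d : G) : coboundary3 ω a b c d = 1 :=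
  div_eq_one.mpr (hω.1 a b c d)

theorem theta_gamma_mixed_quotient {G : Type*} [Group G] (ω : G → G → G → ℂˣ) (a b x y : G) :
    thetaDPR ω (a * b) x y * gammaDPR ω (x * y) a b /
        (thetaDPR ω a x y * thetaDPR ω b x y * gammaDPR ω x a b *
          gammaDPR ω y (groupConj a x) (groupConj b x)) =
      coboundary3 ω a x (groupConj b x) y *
          coboundary3 ω x (groupConj a x) y (groupConj b (x * y)) /
        (coboundary3 ω a b x y * coboundary3 ω a x y (groupConj b (x * y)) *
          coboundary3 ω x (groupConj a x) (groupConj b x) y *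
          coboundary3 ω x y (groupConj a (x * y)) (groupConj b (x * y))) := by
  simp only [thetaDPR, gammaDPR, coboundary3, groupConj, mul_assoc, mul_inv_rev,
    mul_inv_cancel_left]
  rw [← Additive.ofMul.apply_eq_iff_eq]
  simp only [ofMul_mul, ofMul_div, ofMul_inv]
  abel

theorem theta_gamma_mixed_identity_general {G : Type*} [Group G]
    (ω : G → G → G → ℂˣ) (hω : IsNormalized3Cocycle ω) :
    ∀ a b x y : G,
      thetaDPR ω (a * b) x y * gammaDPR ω (x * y) a b =
        thetaDPR ω a x y * thetaDPR ω b x y * gammaDPR ω x a b *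
          gammaDPR ω y (groupConj a x) (groupConj b x) := by
  intro a b x y
  have h := theta_gamma_mixed_quotient ω a b x y
  simp only [hω.coboundary3_eq_one, mul_one, div_one] at h
  exact div_eq_one.mp h

/-- The mixed identity making the coproduct of `D^ω(G)` an algebra homomorphism. -/
theorem theta_gamma_mixed_identity {G : Type*} [Group G] [Finite G]
    (ω : G → G → G → ℂˣ) (hω : IsNormalized3Cocycle ω) :
    ∀ a b x y : G,
      thetaDPR ω (a * b) x y * gammaDPR ω (x * y) a b =
        thetaDPR ω a x y * thetaDPR ω b x y * gammaDPR ω x a b *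
          gammaDPR ω y (groupConj a x) (groupConj b x) :=
  theta_gamma_mixed_identity_general ω hω
end

section
/- Let G be a finite group and ω a normalized 3-cocycle on G with values in ℂˣ. Then for all x, a, b, c ∈ G one has γ_x(a,b)·γ_x(ab,c)·ω(a^x, b^x, c^x) = ω(a,b,c)·γ_x(a,bc)·γ_x(b,c). (This identity is what makes the coproduct of the twisted quantum double D^ω(G) quasi-coassociative with respect to the Drinfeld associator determined by ω.) -/
/-! The identity is the quotient of four instances of the cocycle identity, at `(a, b, c, x)`,
`(a, b, x, c^x)`, `(a, x, b^x, c^x)` and `(x, a^x, b^x, c^x)`. Since `x * g^x = g * x`, the terms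
`ω(a, b, cx)`, `ω(a, bx, c^x)` and `ω(ax, b^x, c^x)` each occur in two of them and cancel. -/

theorem groupConj_mul {G : Type*} [Group G] (a b x : G) :
    groupConj (a * b) x = groupConj a x * groupConj b x := by
  simp only [groupConj, mul_assoc, mul_inv_cancel_left]

theorem mul_groupConj {G : Type*} [Group G] (g x : G) : x * groupConj g x = g * x := by
  simp only [groupConj, mul_assoc, mul_inv_cancel_left]

theorem gamma_quasi_coassociativity_general {G : Type*} [Group G]
    (ω : G → G → G → ℂˣ) (hω : IsNormalized3Cocycle ω) :
    ∀ x a b c : G,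
      gammaDPR ω x a b * gammaDPR ω x (a * b) c *
          ω (groupConj a x) (groupConj b x) (groupConj c x) =
        ω a b c * gammaDPR ω x a (b * c) * gammaDPR ω x b c := by
  obtain ⟨hcocycle, -⟩ := hω
  intro x a b c
  have h₁ := congrArg Additive.ofMul (hcocycle a b c x)
  have h₂ := congrArg Additive.ofMul (hcocycle a b x (groupConj c x))
  have h₃ := congrArg Additive.ofMul (hcocycle a x (groupConj b x) (groupConj c x))
  have h₄ := congrArg Additive.ofMul (hcocycle x (groupConj a x) (groupConj b x) (groupConj c x))
  simp only [mul_groupConj, ofMul_mul] at h₁ h₂ h₃ h₄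
  apply Additive.ofMul.injective
  simp only [gammaDPR, groupConj_mul, ofMul_mul, ofMul_inv]
  linear_combination (norm := abel) h₂ - h₁ + h₄ - h₃

/-- The identity giving quasi-coassociativity of the coproduct of `D^ω(G)`. -/
theorem gamma_quasi_coassociativity {G : Type*} [Group G] [Finite G]
    (ω : G → G → G → ℂˣ) (hω : IsNormalized3Cocycle ω) :
    ∀ x a b c : G,
      gammaDPR ω x a b * gammaDPR ω x (a * b) c *
          ω (groupConj a x) (groupConj b x) (groupConj c x) =
        ω a b c * gammaDPR ω x a (b * c) * gammaDPR ω x b c :=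
  gamma_quasi_coassociativity_general ω hω
end
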